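/- Let p > 2, η ≥ 0, θ ∈ (0,1), C_{η,p} = ((1+η²)^{p/2} + η^p − 2(1/2+η²)^{p/2})^{-1}. For any unit vector q ∈ ℝⁿ, let r = (1/2)·min_i min{‖q−e_i‖₂², ‖q+e_i‖₂²}, and let Ω be a θ-Bernoulli random subset of {1,…,n}. Then r ≤ (C_{η,p}/(θ(1−θ)))·(θ(1+η²)^{p/2} + (1−θ)η^p − E_Ω[(‖q_Ω‖₂² + η²)^{p/2}]). -/

import Mathlib

/-!
For `x = ‖q_Ω‖₂² ∈ [0, 1]`, convexity of `f x = (x + η²)^(p/2)` gives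
`f x ≤ (1 - x) f 0 + x f 1 - K x (1 - x)` with `K = f 1 + f 0 - 2 f (1/2) = C_{η,p}⁻¹ > 0`.
Under the Bernoulli law `E x = θ` and `E x² = θ² + θ(1 - θ) ∑ qᵢ⁴`, so the deficiency is at least
`K θ (1 - θ) (1 - ∑ qᵢ⁴)`. Finally `r ≤ 1 - qᵢ²` for every `i`, and averaging with weights `qᵢ²`
gives `r ≤ 1 - ∑ qᵢ⁴`.
-/

open Real Finset

theorem ConvexOn.midpoint_defect_nonneg {f : ℝ → ℝ} (hf : ConvexOn ℝ (Set.Icc 0 1) f) :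
    0 ≤ f 1 + f 0 - 2 * f (1 / 2) := by
  have h := hf.2 (Set.left_mem_Icc.2 zero_le_one) (Set.right_mem_Icc.2 zero_le_one)
    (by norm_num : (0 : ℝ) ≤ 1 / 2) (by norm_num : (0 : ℝ) ≤ 1 / 2) (by norm_num)
  norm_num at h
  linarith

theorem StrictConvexOn.midpoint_defect_pos {f : ℝ → ℝ} (hf : StrictConvexOn ℝ (Set.Icc 0 1) f) :
    0 < f 1 + f 0 - 2 * f (1 / 2) := by
  have h := hf.2 (Set.left_mem_Icc.2 zero_le_one) (Set.right_mem_Icc.2 zero_le_one)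
    zero_ne_one (by norm_num : (0 : ℝ) < 1 / 2) (by norm_num : (0 : ℝ) < 1 / 2) (by norm_num)
  norm_num at h
  linarith

/- The chords of `f` over `[0, 1/2]` and `[1/2, 1]` lie above `f` and below the full chord by
`K min(x, 1 - x) ≥ K x (1 - x)`, where `K` is the midpoint defect. -/
theorem ConvexOn.le_chord_sub_midpoint_defect_mul {f : ℝ → ℝ} (hf : ConvexOn ℝ (Set.Icc 0 1) f)
    {x : ℝ} (hx : x ∈ Set.Icc 0 1) :
    f x ≤ (1 - x) * f 0 + x * f 1 - (f 1 + f 0 - 2 * f (1 / 2)) * (x * (1 - x)) := by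
  obtain ⟨hx0, hx1⟩ := hx
  have hK := hf.midpoint_defect_nonneg
  have half_mem : (1 / 2 : ℝ) ∈ Set.Icc 0 1 := ⟨by norm_num, by norm_num⟩
  rcases le_total x (1 / 2) with hx | hx
  · have h := hf.2 (Set.left_mem_Icc.2 zero_le_one) half_mem
      (by linarith : (0 : ℝ) ≤ 1 - 2 * x) (by linarith : (0 : ℝ) ≤ 2 * x) (by ring)
    simp only [smul_eq_mul] at h
    rw [show (1 - 2 * x) * 0 + 2 * x * (1 / 2) = x by ring] at h
    nlinarith [mul_nonneg hK (sq_nonneg x)]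
  · have h := hf.2 half_mem (Set.right_mem_Icc.2 zero_le_one)
      (by linarith : (0 : ℝ) ≤ 2 - 2 * x) (by linarith : (0 : ℝ) ≤ 2 * x - 1) (by ring)
    simp only [smul_eq_mul] at h
    rw [show (2 - 2 * x) * (1 / 2) + (2 * x - 1) * 1 = x by ring] at h
    nlinarith [mul_nonneg hK (sq_nonneg (1 - x))]

theorem strictConvexOn_rpow_add {s : ℝ} (hs : 1 < s) {b : ℝ} (hb : 0 ≤ b) :
    StrictConvexOn ℝ (Set.Icc 0 1) fun x : ℝ => (x + b) ^ s :=
  ((strictConvexOn_rpow hs).translate_left b).subset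
    (fun x hx => by simp only [Set.mem_preimage, Set.mem_Ici]; linarith [hx.1]) (convex_Icc 0 1)

section Bernoulli

variable {ι : Type*} [Fintype ι] (θ : ℝ)

/-- `E_Ω g(Ω)` for a `θ`-Bernoulli random subset `Ω` of `ι`. -/
noncomputable def bernoulliExpect (g : Finset ι → ℝ) : ℝ :=
  ∑ S ∈ (univ : Finset ι).powerset, θ ^ #S * (1 - θ) ^ (Fintype.card ι - #S) * g S

theorem bernoulliExpect_const (c : ℝ) : bernoulliExpect θ (fun _ : Finset ι => c) = c := by
  rw [bernoulliExpect, ← sum_mul, ← card_univ, sum_pow_mul_eq_add_pow, add_sub_cancel,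
    one_pow, one_mul]

theorem bernoulliExpect_add (g h : Finset ι → ℝ) :
    bernoulliExpect θ (fun S => g S + h S) = bernoulliExpect θ g + bernoulliExpect θ h := by
  simp only [bernoulliExpect, mul_add, sum_add_distrib]

theorem bernoulliExpect_const_mul (c : ℝ) (g : Finset ι → ℝ) :
    bernoulliExpect θ (fun S => c * g S) = c * bernoulliExpect θ g := by
  simp only [bernoulliExpect, mul_sum]
  exact sum_congr rfl fun S _ => by ring

theorem bernoulliExpect_sum {κ : Type*} (s : Finset κ) (g : κ → Finset ι → ℝ) :
    bernoulliExpect θ (fun S => ∑ k ∈ s, g k S) = ∑ k ∈ s, bernoulliExpect θ (g k) := by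
  simp only [bernoulliExpect, mul_sum]
  exact sum_comm

variable {θ} in
theorem bernoulliExpect_mono (hθ : θ ∈ Set.Icc 0 1) {g h : Finset ι → ℝ} (hgh : ∀ S, g S ≤ h S) :
    bernoulliExpect θ g ≤ bernoulliExpect θ h :=
  sum_le_sum fun S _ => mul_le_mul_of_nonneg_left (hgh S)
    (mul_nonneg (pow_nonneg hθ.1 _) (pow_nonneg (sub_nonneg.2 hθ.2) _))

variable [DecidableEq ι]

theorem bernoulliExpect_subset_indicator (T : Finset ι) :
    bernoulliExpect θ (fun S => if T ⊆ S then 1 else 0) = θ ^ #T := by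
  have summand : ∀ S : Finset ι, θ ^ #S * (1 - θ) ^ (Fintype.card ι - #S) * (if T ⊆ S then 1 else 0)
      = (∏ _i ∈ S, θ) * ∏ i ∈ univ \ S, (if i ∈ T then 0 else 1 - θ) := by
    intro S
    rw [prod_const]
    split_ifs with hTS
    · rw [prod_congr rfl fun i hi => if_neg fun hiT => (mem_sdiff.1 hi).2 (hTS hiT), prod_const,
        card_univ_sdiff]
      ring
    · obtain ⟨t, htT, htS⟩ := not_subset.1 hTS
      rw [prod_eq_zero (mem_sdiff.2 ⟨mem_univ t, htS⟩) (by simp [htT])]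
      ring
  calc bernoulliExpect θ (fun S => if T ⊆ S then 1 else 0)
      = ∏ i, (θ + if i ∈ T then 0 else 1 - θ) := by
        rw [prod_add]; exact sum_congr rfl fun S _ => summand S
    _ = ∏ i, if i ∈ T then θ else 1 := prod_congr rfl fun i _ => by split_ifs <;> ring
    _ = θ ^ #T := by rw [prod_ite_mem, univ_inter, prod_const]

theorem bernoulliExpect_sum_mem (a : ι → ℝ) :
    bernoulliExpect θ (fun S => ∑ i ∈ S, a i) = θ * ∑ i, a i := by
  have hmem : ∀ i, bernoulliExpect θ (fun S : Finset ι => if i ∈ S then 1 else 0) = θ := fun i => by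
    simpa only [singleton_subset_iff, card_singleton, pow_one]
      using bernoulliExpect_subset_indicator θ {i}
  calc bernoulliExpect θ (fun S => ∑ i ∈ S, a i)
      = bernoulliExpect θ (fun S => ∑ i, a i * if i ∈ S then 1 else 0) := by
        simp only [mul_ite, mul_one, mul_zero, sum_ite_mem, univ_inter]
    _ = θ * ∑ i, a i := by
        simp only [bernoulliExpect_sum, bernoulliExpect_const_mul, hmem, mul_sum, mul_comm]

theorem bernoulliExpect_sq_sum_mem (a : ι → ℝ) :
    bernoulliExpect θ (fun S => (∑ i ∈ S, a i) ^ 2)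
      = θ ^ 2 * (∑ i, a i) ^ 2 + θ * (1 - θ) * ∑ i, a i ^ 2 := by
  have hpair : ∀ i j : ι, bernoulliExpect θ (fun S : Finset ι => if {i, j} ⊆ S then 1 else 0)
      = θ ^ 2 + if i = j then θ * (1 - θ) else 0 := fun i j => by
    rw [bernoulliExpect_subset_indicator]
    split_ifs with hij
    · rw [hij, insert_eq_of_mem (mem_singleton_self j), card_singleton]; ring
    · rw [card_pair hij]; ring
  calc bernoulliExpect θ (fun S => (∑ i ∈ S, a i) ^ 2)
      = bernoulliExpect θ (fun S => ∑ i, ∑ j, a i * a j * if {i, j} ⊆ S then 1 else 0) := by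
        congr 1
        funext S
        rw [sq, sum_mul_sum, ← sum_subset (subset_univ S) fun i _ hi =>
          sum_eq_zero fun j _ => by simp [insert_subset_iff, hi]]
        refine sum_congr rfl fun i hi => ?_
        rw [← sum_subset (subset_univ S) fun j _ hj => by simp [insert_subset_iff, hj]]
        exact sum_congr rfl fun j hj => by simp [insert_subset_iff, hi, hj]
    _ = θ ^ 2 * (∑ i, a i) ^ 2 + θ * (1 - θ) * ∑ i, a i ^ 2 := by
        simp only [bernoulliExpect_sum, bernoulliExpect_const_mul, hpair]
        simp only [mul_add, sum_add_distrib, mul_ite, mul_zero, sum_ite_eq, mem_univ, if_true]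
        rw [sq (∑ i, a i), sum_mul_sum, mul_sum, mul_sum]
        congr 1
        · exact sum_congr rfl fun i _ => by rw [mul_sum]; exact sum_congr rfl fun j _ => by ring
        · exact sum_congr rfl fun i _ => by ring

variable {θ} in
theorem ConvexOn.bernoulliExpect_comp_sum_le {f : ℝ → ℝ} (hf : ConvexOn ℝ (Set.Icc 0 1) f)
    (hθ : θ ∈ Set.Icc 0 1) {a : ι → ℝ}
    (ha : ∀ i, 0 ≤ a i) (ha1 : ∑ i, a i = 1) :
    bernoulliExpect θ (fun S => f (∑ i ∈ S, a i))
      ≤ θ * f 1 + (1 - θ) * f 0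
        - (f 1 + f 0 - 2 * f (1 / 2)) * (θ * (1 - θ)) * (1 - ∑ i, a i ^ 2) := by
  set K := f 1 + f 0 - 2 * f (1 / 2)
  have hmem : ∀ S : Finset ι, ∑ i ∈ S, a i ∈ Set.Icc (0 : ℝ) 1 := fun S =>
    ⟨sum_nonneg fun i _ => ha i,
      ha1 ▸ sum_le_sum_of_subset_of_nonneg (subset_univ S) fun i _ _ => ha i⟩
  calc bernoulliExpect θ (fun S => f (∑ i ∈ S, a i))
      ≤ bernoulliExpect θ (fun S => f 0 + ((f 1 - f 0 - K) * ∑ i ∈ S, a i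
          + K * (∑ i ∈ S, a i) ^ 2)) :=
        bernoulliExpect_mono hθ fun S =>
          (hf.le_chord_sub_midpoint_defect_mul (hmem S)).trans_eq (by ring)
    _ = θ * f 1 + (1 - θ) * f 0 - K * (θ * (1 - θ)) * (1 - ∑ i, a i ^ 2) := by
        simp only [bernoulliExpect_add, bernoulliExpect_const, bernoulliExpect_const_mul,
          bernoulliExpect_sum_mem, bernoulliExpect_sq_sum_mem, ha1]
        ring

end Bernoulli

section SignedBasis

variable {ι : Type*} [Fintype ι] [DecidableEq ι] {q : ι → ℝ}

theorem sum_sq_add_ite_eq (q : ι → ℝ) (i : ι) (c : ℝ) :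
    ∑ j, (q j + if j = i then c else 0) ^ 2 = ∑ j, q j ^ 2 + (2 * c * q i + c ^ 2) := by
  have h : ∀ j, (q j + if j = i then c else 0) ^ 2
      = q j ^ 2 + if j = i then 2 * c * q j + c ^ 2 else 0 := fun j => by split_ifs <;> ring
  simp only [h, sum_add_distrib, sum_ite_eq', mem_univ, if_true]

theorem half_min_dist_sq_signed_basis_le (hq : ∑ j, q j ^ 2 = 1) (i : ι) :
    1 / 2 * min (∑ j, (q j - if j = i then 1 else 0) ^ 2) (∑ j, (q j + if j = i then 1 else 0) ^ 2)
      ≤ 1 - q i ^ 2 := by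
  have hminus : ∑ j, (q j - if j = i then 1 else 0) ^ 2 = 2 - 2 * q i :=
    calc _ = ∑ j, (q j + if j = i then -1 else 0) ^ 2 :=
          sum_congr rfl fun j _ => by split_ifs <;> ring
      _ = 2 - 2 * q i := by rw [sum_sq_add_ite_eq, hq]; ring
  have hplus : ∑ j, (q j + if j = i then 1 else 0) ^ 2 = 2 + 2 * q i := by
    rw [sum_sq_add_ite_eq, hq]; ring
  have hqi : |q i| ≤ 1 := (sq_le_one_iff_abs_le_one _).1 <|
    hq ▸ single_le_sum (fun j _ => sq_nonneg (q j)) (mem_univ i)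
  obtain ⟨hlo, hhi⟩ := abs_le.1 hqi
  rw [hminus, hplus]
  rcases le_total 0 (q i) with h | h
  · nlinarith [min_le_left (2 - 2 * q i) (2 + 2 * q i)]
  · nlinarith [min_le_right (2 - 2 * q i) (2 + 2 * q i)]

theorem half_inf_dist_sq_signed_basis_le [Nonempty ι] (hq : ∑ j, q j ^ 2 = 1) :
    1 / 2 * univ.inf' univ_nonempty (fun i => min (∑ j, (q j - if j = i then 1 else 0) ^ 2)
        (∑ j, (q j + if j = i then 1 else 0) ^ 2))
      ≤ 1 - ∑ i, (q i ^ 2) ^ 2 := by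
  set r := 1 / 2 * univ.inf' univ_nonempty (fun i => min (∑ j, (q j - if j = i then 1 else 0) ^ 2)
    (∑ j, (q j + if j = i then 1 else 0) ^ 2))
  have hr : ∀ i, r ≤ 1 - q i ^ 2 := fun i =>
    (mul_le_mul_of_nonneg_left (inf'_le _ (mem_univ i)) (by norm_num)).trans
      (half_min_dist_sq_signed_basis_le hq i)
  calc r = ∑ i, q i ^ 2 * r := by rw [← sum_mul, hq, one_mul]
    _ ≤ ∑ i, q i ^ 2 * (1 - q i ^ 2) :=
        sum_le_sum fun i _ => mul_le_mul_of_nonneg_left (hr i) (sq_nonneg _)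
    _ = ∑ i, q i ^ 2 - ∑ i, (q i ^ 2) ^ 2 := by
        rw [← sum_sub_distrib]; exact sum_congr rfl fun i _ => by ring
    _ = 1 - ∑ i, (q i ^ 2) ^ 2 := by rw [hq]

end SignedBasis

/-- Noisy sharpness over the sphere: the deficiency of `E_Ω (‖q_Ω‖₂²+η²)^(p/2)` from its maximum
controls half the squared distance of the unit vector `q` to the nearest signed coordinate
vector, with constant `C_{η,p} = ((1+η²)^(p/2) + η^p − 2(1/2+η²)^(p/2))⁻¹`. -/
theorem noisy_sphere_sharpness (n : ℕ) (p η θ : ℝ) (hp : 2 < p) (hη : 0 ≤ η)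
    (hθ : θ ∈ Set.Ioo (0 : ℝ) 1) (q : Fin (n + 1) → ℝ) (hq : ∑ i, q i ^ 2 = 1) :
    (1 / 2) * (Finset.univ.inf' Finset.univ_nonempty (fun i : Fin (n + 1) =>
        min (∑ j, (q j - (if j = i then 1 else 0)) ^ 2)
            (∑ j, (q j + (if j = i then 1 else 0)) ^ 2)))
      ≤ ((1 + η ^ 2) ^ (p / 2) + η ^ p - 2 * ((1 : ℝ) / 2 + η ^ 2) ^ (p / 2))⁻¹ /
            (θ * (1 - θ)) *
          (θ * (1 + η ^ 2) ^ (p / 2) + (1 - θ) * η ^ p -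
            ∑ S ∈ (Finset.univ : Finset (Fin (n + 1))).powerset,
              θ ^ S.card * (1 - θ) ^ (n + 1 - S.card) *
                ((∑ i ∈ S, q i ^ 2) + η ^ 2) ^ (p / 2)) := by
  obtain ⟨hθ0, hθ1⟩ := hθ
  have hf := strictConvexOn_rpow_add (by linarith : 1 < p / 2) (sq_nonneg η)
  have hηp : η ^ p = (0 + η ^ 2) ^ (p / 2) := by
    rw [zero_add, ← rpow_natCast, ← rpow_mul hη]
    congr 1
    push_cast
    ring
  have hK := hf.midpoint_defect_pos
  have ht : 0 < θ * (1 - θ) := mul_pos hθ0 (sub_pos.2 hθ1)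
  have hE := hf.convexOn.bernoulliExpect_comp_sum_le ⟨hθ0.le, hθ1.le⟩ (fun i => sq_nonneg (q i)) hq
  simp only [bernoulliExpect, Fintype.card_fin] at hE
  rw [hηp]
  calc _ ≤ 1 - ∑ i, (q i ^ 2) ^ 2 := half_inf_dist_sq_signed_basis_le hq
    _ ≤ _ := by
      rw [div_mul_eq_mul_div, inv_mul_eq_div, div_div, le_div_iff₀ (mul_pos hK ht)]
      linarith
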